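/- arXiv:1009.5093 — 7 statements merged into one kernel-verified Lean document; each statement's English description precedes it below -/
import Mathlib

section
/- Let C ⊂ ℝ^d be a bounded convex set with nonempty interior and let s₀ > 0. Then there exists c̃ > 0 such that for all x ∈ C and all s ∈ (0, s₀), λ^d(C ∩ B₂(x,s)) ≥ c̃ · λ^d(B₂(x,s)), where B₂ denotes Euclidean balls and λ^d is Lebesgue measure. -/
open MeasureTheory Metric

/-!
If `ball x₀ r ⊆ C ⊆ closedBall x₀ R`, then for `x ∈ C` the homothety with centre `x` and ratio
`t = s / M`, `M ≥ R + r`, maps `ball x₀ r` into `C ∩ ball x s` by convexity. The image is a ball of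
radius `(r / M) * s`, so its measure is `(r / M) ^ d` times that of `ball x s`.
-/

section

variable {E : Type*} [NormedAddCommGroup E] [NormedSpace ℝ E]

lemma Convex.ball_add_smul_sub_subset {C : Set E} (hC : Convex ℝ C) {x y : E} {r t : ℝ}
    (hx : x ∈ C) (hy : ball y r ⊆ C) (ht₀ : 0 < t) (ht₁ : t ≤ 1) :
    ball (x + t • (y - x)) (t * r) ⊆ C := by
  intro z hz
  set w := y + t⁻¹ • (z - (x + t • (y - x)))
  have hw : w ∈ ball y r := by
    rw [mem_ball, dist_eq_norm, add_sub_cancel_left, norm_smul, norm_inv,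
      Real.norm_of_nonneg ht₀.le, inv_mul_lt_iff₀ ht₀, ← dist_eq_norm]
    exact hz
  have hz_eq : z = x + t • (w - x) := by
    simp only [w]
    match_scalars <;> field_simp <;> ring
  exact hz_eq ▸ hC.add_smul_sub_mem hx (hy hw) ⟨ht₀.le, ht₁⟩

lemma ball_add_smul_sub_subset_ball (x y : E) {r t : ℝ} (ht : 0 ≤ t) :
    ball (x + t • (y - x)) (t * r) ⊆ ball x (t * (dist x y + r)) := by
  refine ball_subset_ball' (le_of_eq ?_)
  rw [dist_eq_norm, add_sub_cancel_left, norm_smul, Real.norm_of_nonneg ht, ← dist_eq_norm,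
    dist_comm]
  ring

variable [FiniteDimensional ℝ E] [MeasurableSpace E] [BorelSpace E]
  (μ : Measure E) [μ.IsAddHaarMeasure]

lemma Convex.ofReal_mul_addHaar_ball_le_inter_ball {C : Set E} (hC : Convex ℝ C) {x₀ x : E}
    {r M s : ℝ} (hr : 0 < r) (hball : ball x₀ r ⊆ C) (hx : x ∈ C) (hxM : dist x x₀ + r ≤ M)
    (hs : 0 < s) (hsM : s ≤ M) :
    ENNReal.ofReal ((r / M) ^ Module.finrank ℝ E) * μ (ball x s) ≤ μ (C ∩ ball x s) := by
  have hM : 0 < M := hs.trans_le hsM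
  set t := s / M
  have ht₀ : 0 < t := div_pos hs hM
  have hsub : ball (x + t • (x₀ - x)) (t * r) ⊆ C ∩ ball x s := by
    refine Set.subset_inter (hC.ball_add_smul_sub_subset hx hball ht₀ ((div_le_one hM).2 hsM))
      ((ball_add_smul_sub_subset_ball x x₀ ht₀.le).trans (ball_subset_ball ?_))
    calc t * (dist x x₀ + r) ≤ t * M := by gcongr
      _ = s := div_mul_cancel₀ s hM.ne'
  calc ENNReal.ofReal ((r / M) ^ Module.finrank ℝ E) * μ (ball x s)
      = μ (ball (x + t • (x₀ - x)) (r / M * s)) := by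
        rw [Measure.addHaar_ball_mul_of_pos μ _ (div_pos hr hM), Measure.addHaar_ball_center]
    _ = μ (ball (x + t • (x₀ - x)) (t * r)) := by rw [div_mul_comm]
    _ ≤ μ (C ∩ ball x s) := measure_mono hsub

theorem Convex.exists_pos_ofReal_mul_addHaar_ball_le_inter_ball {C : Set E} (hC : Convex ℝ C)
    (hB : Bornology.IsBounded C) (hint : (interior C).Nonempty) (s₀ : ℝ) :
    ∃ c : ℝ, 0 < c ∧ ∀ x ∈ C, ∀ s ∈ Set.Ioo (0 : ℝ) s₀,
      ENNReal.ofReal c * μ (ball x s) ≤ μ (C ∩ ball x s) := by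
  obtain ⟨x₀, hx₀⟩ := hint
  obtain ⟨r, hr, hball⟩ := isOpen_iff.mp isOpen_interior x₀ hx₀
  obtain ⟨R, hR, hCR⟩ := hB.subset_closedBall_lt 0 x₀
  set M := max (R + r) s₀
  have hM : 0 < M := lt_max_of_lt_left (by linarith)
  refine ⟨(r / M) ^ Module.finrank ℝ E, by positivity, fun x hx s hs => ?_⟩
  refine hC.ofReal_mul_addHaar_ball_le_inter_ball μ hr (hball.trans interior_subset) hx ?_ hs.1
    (hs.2.le.trans (le_max_right _ _))
  have : dist x x₀ ≤ R := hCR hx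
  linarith [le_max_left (R + r) s₀]

end

theorem stmt6_general (d : ℕ) (C : Set (EuclideanSpace ℝ (Fin d)))
    (hC : Convex ℝ C) (hB : Bornology.IsBounded C) (hint : (interior C).Nonempty)
    (s₀ : ℝ) :
    ∃ c : ℝ, 0 < c ∧ ∀ x ∈ C, ∀ s ∈ Set.Ioo (0 : ℝ) s₀,
      ENNReal.ofReal c * volume (ball x s) ≤ volume (C ∩ ball x s) :=
  hC.exists_pos_ofReal_mul_addHaar_ball_le_inter_ball volume hB hint s₀

/-- A bounded convex set with nonempty interior is "peakless": its Lebesgue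
density is uniformly bounded below at all points of `C` and all scales `s ∈ (0,s₀)`. -/
theorem stmt6 (d : ℕ) (C : Set (EuclideanSpace ℝ (Fin d)))
    (hC : Convex ℝ C) (hB : Bornology.IsBounded C) (hint : (interior C).Nonempty)
    (s₀ : ℝ) (hs₀ : 0 < s₀) :
    ∃ c : ℝ, 0 < c ∧ ∀ x ∈ C, ∀ s ∈ Set.Ioo (0 : ℝ) s₀,
      ENNReal.ofReal c * volume (ball x s) ≤ volume (C ∩ ball x s) :=
  stmt6_general d C hC hB hint s₀
end

section
/- Suppose f : ℝ^d → ℝ has the convex sublevel approximation property (CSAP) outside B̄(0,R) with respect to a norm ‖·‖ on ℝ^d. Then f has the peakless sublevel property (PSP) outside B̄(0,R): there exist constants s₀, c_f > 0 such that for every x with ‖x‖ > R and every s ∈ (0,s₀), λ^d({y : f(y) ≤ f(x)} ∩ B(x,s)) ≥ c_f · λ^d(B(x,s)). -/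
open MeasureTheory Metric Pointwise

/-!
If `x` lies in a convex set `K` containing a ball `B(w, r)` with `dist w x ≤ D`, the homothety
with centre `x` and ratio `s / (r + D)` maps `B(w, r)` into `K ∩ B(x, s)`, so `K` fills at least
the fraction `(r / (r + D))^d` of `B(x, s)`. For `K = φ(aC)` with `B(z, ρ) ⊆ C` one may take
`r = aρ` and `D = a · diam C`, and the fraction `(ρ / (ρ + diam C))^d` no longer depends on the
scale `a`; `a ≥ 1` makes the admissible radii `s ≤ a(ρ + diam C)` uniform.
-/

open AffineMap in
theorem Convex.image_homothety_subset {E : Type*} [AddCommGroup E] [Module ℝ E] {K : Set E}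
    (hK : Convex ℝ K) {x : E} (hx : x ∈ K) {t : ℝ} (ht : t ∈ Set.Icc (0 : ℝ) 1) :
    homothety x t '' K ⊆ K := by
  rintro _ ⟨v, hv, rfl⟩
  rw [homothety_eq_lineMap]
  exact hK.lineMap_mem hx hv ht

open AffineMap Measure Module in
theorem Convex.ofReal_mul_addHaar_ball_le_addHaar_inter_ball {E : Type*} [NormedAddCommGroup E]
    [NormedSpace ℝ E] [MeasurableSpace E] [BorelSpace E] [FiniteDimensional ℝ E]
    (μ : Measure E) [μ.IsAddHaarMeasure] {K : Set E} (hK : Convex ℝ K) {x w : E} {r D s : ℝ}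
    (hx : x ∈ K) (hr : 0 < r) (hwK : ball w r ⊆ K) (hwx : dist w x ≤ D) (hs : 0 < s)
    (hsD : s ≤ r + D) :
    ENNReal.ofReal ((r / (r + D)) ^ finrank ℝ E) * μ (ball x s) ≤ μ (K ∩ ball x s) := by
  have hrD : 0 < r + D := hr.trans_le (le_add_of_nonneg_right (dist_nonneg.trans hwx))
  set t := s / (r + D)
  have ht0 : 0 < t := div_pos hs hrD
  have hball : homothety x t '' ball w r ⊆ ball x s := by
    rintro _ ⟨v, hv, rfl⟩
    rw [mem_ball, dist_homothety_center, Real.norm_of_nonneg ht0.le]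
    calc t * dist x v ≤ t * (dist v w + dist w x) := by
          gcongr; rw [dist_comm]; exact dist_triangle _ _ _
      _ < t * (r + D) :=
          mul_lt_mul_of_pos_left (add_lt_add_of_lt_of_le (mem_ball.1 hv) hwx) ht0
      _ = s := div_mul_cancel₀ s hrD.ne'
  have hK' : homothety x t '' ball w r ⊆ K := (Set.image_mono hwK).trans <|
    hK.image_homothety_subset hx ⟨ht0.le, div_le_one_of_le₀ hsD hrD.le⟩
  calc ENNReal.ofReal ((r / (r + D)) ^ finrank ℝ E) * μ (ball x s)
      = μ (homothety x t '' ball w r) := by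
        rw [addHaar_image_homothety, addHaar_ball_of_pos μ _ hr, addHaar_ball_of_pos μ _ hs,
          ← mul_assoc, ← mul_assoc, abs_of_nonneg (pow_nonneg ht0.le _),
          ← ENNReal.ofReal_mul (by positivity), ← ENNReal.ofReal_mul (by positivity),
          ← mul_pow, ← mul_pow]
        congr 3
        simp only [t]
        ring
    _ ≤ μ (K ∩ ball x s) := measure_mono (Set.subset_inter hK' hball)

theorem Convex.image_isometryEquiv {E F : Type*} [NormedAddCommGroup E] [NormedSpace ℝ E]
    [NormedAddCommGroup F] [NormedSpace ℝ F] {s : Set E} (hs : Convex ℝ s) (φ : E ≃ᵢ F) :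
    Convex ℝ (φ '' s) := by
  simpa using hs.affine_image φ.toRealAffineIsometryEquiv.toAffineEquiv.toAffineMap

theorem IsometryEquiv.ball_subset_image_smul {E F : Type*} [NormedAddCommGroup E]
    [NormedSpace ℝ E] [MetricSpace F] (φ : E ≃ᵢ F) {C : Set E} {z : E} {ρ a : ℝ} (ha : 0 < a)
    (hzC : ball z ρ ⊆ C) : ball (φ (a • z)) (a * ρ) ⊆ φ '' (a • C) := by
  have : a • ball z ρ = ball (a • z) (a * ρ) := by
    rw [_root_.smul_ball ha.ne', Real.norm_of_nonneg ha.le]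
  rw [← φ.image_ball, ← this]
  exact Set.image_mono (Set.smul_set_mono hzC)

theorem stmt7_general (d : ℕ) (f : EuclideanSpace ℝ (Fin d) → ℝ) (R : ℝ)
    (C : Set (EuclideanSpace ℝ (Fin d)))
    (hC : Convex ℝ C) (hB : Bornology.IsBounded C) (hint : (interior C).Nonempty)
    (hcsap : ∀ x : EuclideanSpace ℝ (Fin d), R < ‖x‖ →
      ∃ φ : EuclideanSpace ℝ (Fin d) ≃ᵢ EuclideanSpace ℝ (Fin d), ∃ a : ℝ, 1 ≤ a ∧
        x ∈ φ '' (a • C) ∧ φ '' (a • C) ⊆ {y | f y ≤ f x}) :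
    ∃ s₀ > (0 : ℝ), ∃ c > (0 : ℝ), ∀ x : EuclideanSpace ℝ (Fin d), R < ‖x‖ →
      ∀ s ∈ Set.Ioo (0 : ℝ) s₀,
        ENNReal.ofReal c * volume (ball x s) ≤ volume ({y | f y ≤ f x} ∩ ball x s) := by
  obtain ⟨z, hz⟩ := hint
  obtain ⟨ρ, hρ, hzC⟩ := Metric.isOpen_iff.1 isOpen_interior z hz
  replace hzC : ball z ρ ⊆ C := hzC.trans interior_subset
  have hdiam : 0 ≤ diam C := diam_nonneg
  refine ⟨ρ + diam C, by positivity, (ρ / (ρ + diam C)) ^ d, by positivity, ?_⟩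
  rintro x hx s ⟨hs, hs₀⟩
  obtain ⟨φ, a, ha, ⟨u, hu, rfl⟩, hsub⟩ := hcsap x hx
  have ha₀ : 0 < a := one_pos.trans_le ha
  have hdist : dist (φ (a • z)) (φ u) ≤ a * diam C :=
    calc dist (φ (a • z)) (φ u) = dist (a • z) u := φ.dist_eq _ _
      _ ≤ diam (a • C) :=
        dist_le_diam_of_mem (hB.smul₀ a) (Set.smul_mem_smul_set (hzC (mem_ball_self hρ))) hu
      _ = a * diam C := by rw [diam_smul₀, Real.norm_of_nonneg ha₀.le]
  have hsD : s ≤ a * ρ + a * diam C := by nlinarith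
  have hdensity := ((hC.smul a).image_isometryEquiv φ).ofReal_mul_addHaar_ball_le_addHaar_inter_ball
    volume ⟨u, hu, rfl⟩ (mul_pos ha₀ hρ) (φ.ball_subset_image_smul ha₀ hzC) hdist hs hsD
  rw [finrank_euclideanSpace_fin, ← mul_add, mul_div_mul_left _ _ ha₀.ne'] at hdensity
  exact hdensity.trans (measure_mono (Set.inter_subset_inter_left _ hsub))

/-- If `f` has the convex sublevel approximation property (CSAP) outside
`B̄(0,R)` (witnessed by a bounded convex set `C` with nonempty interior, Euclidean motions
`φ_x` and scales `a_x ≥ 1`), then `f` has the peakless sublevel property (PSP) outside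
`B̄(0,R)`. -/
theorem stmt7 (d : ℕ) (f : EuclideanSpace ℝ (Fin d) → ℝ) (R : ℝ) (hR : 0 < R)
    (C : Set (EuclideanSpace ℝ (Fin d)))
    (hC : Convex ℝ C) (hB : Bornology.IsBounded C) (hint : (interior C).Nonempty)
    (hcsap : ∀ x : EuclideanSpace ℝ (Fin d), R < ‖x‖ →
      ∃ φ : EuclideanSpace ℝ (Fin d) ≃ᵢ EuclideanSpace ℝ (Fin d), ∃ a : ℝ, 1 ≤ a ∧
        x ∈ φ '' (a • C) ∧ φ '' (a • C) ⊆ {y | f y ≤ f x}) :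
    ∃ s₀ > (0 : ℝ), ∃ c > (0 : ℝ), ∀ x : EuclideanSpace ℝ (Fin d), R < ‖x‖ →
      ∀ s ∈ Set.Ioo (0 : ℝ) s₀,
        ENNReal.ofReal c * volume (ball x s) ≤ volume ({y | f y ≤ f x} ∩ ball x s) :=
  stmt7_general d f R C hC hB hint hcsap
end

section
/- Let h : ℝ^d → [0,∞) be a Lebesgue-measurable density bounded above by ‖h‖_∞ < ∞, and let P = h·λ^d. Let a ∈ ℝ^d, let W ⊂ ℝ^d be a Borel set with P(W) > 0, and suppose s_a > 0 satisfies P(B(a,s_a)) = (1/2)·P(W). Then ∫_W ‖x−a‖^r dP(x) ≥ c · P(W)^{1+r/d}, where c = (1/2)·(1/(2 λ^d(B(0,1)) ‖h‖_∞))^{r/d} and r > 0. -/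
open MeasureTheory Metric

/-- For `P = h·λ^d` with `h ≤ M` and a Borel set `W` with `P(W) > 0`, if
`s_a > 0` satisfies `P(B(a,s_a)) = P(W)/2`, then
`∫_W ‖x-a‖^r dP ≥ c · P(W)^{1+r/d}` with
`c = (1/2)·(1/(2 λ^d(B(0,1)) M))^{r/d}`. -/
theorem stmt9 (d : ℕ) (hd : 0 < d) (r : ℝ) (hr : 0 < r)
    (h : EuclideanSpace ℝ (Fin d) → ℝ) (hmeas : Measurable h)
    (hnn : ∀ x, 0 ≤ h x) (M : ℝ) (hM : ∀ x, h x ≤ M)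
    (P : Measure (EuclideanSpace ℝ (Fin d)))
    (hP : P = volume.withDensity (fun x => ENNReal.ofReal (h x)))
    [IsProbabilityMeasure P]
    (a : EuclideanSpace ℝ (Fin d)) (W : Set (EuclideanSpace ℝ (Fin d)))
    (hW : MeasurableSet W) (hWpos : 0 < P W)
    (sa : ℝ) (hsa : 0 < sa) (hhalf : P (ball a sa) = P W / 2) :
    ENNReal.ofReal
        ((1 / 2) * (1 / (2 * (volume (ball (0 : EuclideanSpace ℝ (Fin d)) 1)).toReal * M))
            ^ (r / d) * (P W).toReal ^ (1 + r / d)) ≤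
      ∫⁻ x in W, ENNReal.ofReal (‖x - a‖ ^ r) ∂P := by
  have hfin : P W ≠ ⊤ := measure_ne_top P W
  set pwR := (P W).toReal with hpwRdef
  have hpwR : 0 < pwR := ENNReal.toReal_pos hWpos.ne' hfin
  set vE := volume (ball (0 : EuclideanSpace ℝ (Fin d)) 1) with hvEdef
  have hvpos : 0 < vE := measure_ball_pos _ _ one_pos
  have hvfin : vE ≠ ⊤ := measure_ball_lt_top.ne
  set vR := vE.toReal with hvRdef
  have hvR : 0 < vR := ENNReal.toReal_pos hvpos.ne' hvfin
  have hM0 : 0 < M := by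
    by_contra hc
    push_neg at hc
    have hzero : ∀ x, h x = 0 := fun x => le_antisymm ((hM x).trans hc) (hnn x)
    have : P W = 0 := by
      rw [hP, withDensity_apply _ hW]
      simp [hzero]
    exact absurd this hWpos.ne'
  have hdR : (0 : ℝ) < d := Nat.cast_pos.mpr hd
  haveI : Nonempty (Fin d) := Fin.pos_iff_nonempty.mp hd
  -- Step A
  have stepA : ENNReal.ofReal (sa ^ r * (pwR / 2)) ≤
      ∫⁻ x in W, ENNReal.ofReal (‖x - a‖ ^ r) ∂P := by
    have h1 : ENNReal.ofReal (pwR / 2) = P W / 2 := by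
      rw [ENNReal.ofReal_div_of_pos two_pos, ENNReal.ofReal_toReal hfin]
      norm_num
    have h2 : P W / 2 ≤ P (W \ ball a sa) := by
      have h3 : P W - P (ball a sa) ≤ P (W \ ball a sa) := le_measure_diff
      rw [hhalf, ENNReal.sub_half hfin] at h3
      exact h3
    rw [ENNReal.ofReal_mul (Real.rpow_nonneg hsa.le r), h1]
    calc ENNReal.ofReal (sa ^ r) * (P W / 2)
        ≤ ENNReal.ofReal (sa ^ r) * P (W \ ball a sa) := mul_le_mul_right h2 _
      _ = ∫⁻ _ in W \ ball a sa, ENNReal.ofReal (sa ^ r) ∂P := (setLIntegral_const _ _).symm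
      _ ≤ ∫⁻ x in W \ ball a sa, ENNReal.ofReal (‖x - a‖ ^ r) ∂P := by
          apply setLIntegral_mono' (hW.diff measurableSet_ball)
          intro x hx
          apply ENNReal.ofReal_le_ofReal
          apply Real.rpow_le_rpow hsa.le _ hr.le
          have hge : sa ≤ dist x a := le_of_not_gt fun hc => hx.2 (mem_ball.mpr hc)
          rwa [dist_eq_norm] at hge
      _ ≤ ∫⁻ x in W, ENNReal.ofReal (‖x - a‖ ^ r) ∂P :=
          lintegral_mono_set Set.diff_subset
  -- Step B : upper bound on P W
  have hball : P (ball a sa) ≤ ENNReal.ofReal M * (ENNReal.ofReal (sa ^ d) * vE) := by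
    rw [hP, withDensity_apply _ measurableSet_ball]
    calc ∫⁻ x in ball a sa, ENNReal.ofReal (h x) ∂volume
        ≤ ∫⁻ _ in ball a sa, ENNReal.ofReal M ∂volume :=
          lintegral_mono fun x => ENNReal.ofReal_le_ofReal (hM x)
      _ = ENNReal.ofReal M * volume (ball a sa) := setLIntegral_const _ _
      _ = ENNReal.ofReal M * (ENNReal.ofReal (sa ^ d) * vE) := by
          rw [Measure.addHaar_ball volume a hsa.le, finrank_euclideanSpace_fin]
  have hup : P W ≤ ENNReal.ofReal (2 * M * sa ^ d) * vE := by
    have h4 : P W = 2 * P (ball a sa) := by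
      rw [hhalf, ENNReal.mul_div_cancel' (by norm_num) (by norm_num)]
    rw [h4]
    calc 2 * P (ball a sa) ≤ 2 * (ENNReal.ofReal M * (ENNReal.ofReal (sa ^ d) * vE)) :=
          mul_le_mul_right hball 2
      _ = ENNReal.ofReal (2 * M * sa ^ d) * vE := by
          rw [ENNReal.ofReal_mul (by positivity), ENNReal.ofReal_mul (by norm_num : (0:ℝ) ≤ 2)]
          rw [ENNReal.ofReal_ofNat]
          ring
  have key : pwR ≤ 2 * M * sa ^ d * vR := by
    have h5 : (ENNReal.ofReal (2 * M * sa ^ d) * vE).toReal = 2 * M * sa ^ d * vR := by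
      rw [ENNReal.toReal_mul, ENNReal.toReal_ofReal (by positivity)]
    calc pwR ≤ (ENNReal.ofReal (2 * M * sa ^ d) * vE).toReal :=
          ENNReal.toReal_mono (ENNReal.mul_ne_top ENNReal.ofReal_ne_top hvfin) hup
      _ = 2 * M * sa ^ d * vR := h5
  have hpos2 : (0:ℝ) < 2 * vR * M := by positivity
  have hfrac : pwR / (2 * vR * M) ≤ sa ^ d := by
    rw [div_le_iff₀ hpos2]
    calc pwR ≤ 2 * M * sa ^ d * vR := key
      _ = sa ^ d * (2 * vR * M) := by ring
  have hsar : (pwR / (2 * vR * M)) ^ (r / d) ≤ sa ^ r := by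
    have h6 : (pwR / (2 * vR * M)) ^ (r / d) ≤ ((sa ^ d : ℝ)) ^ (r / d) :=
      Real.rpow_le_rpow (by positivity) hfrac (by positivity)
    have h7 : ((sa ^ d : ℝ)) ^ (r / d) = sa ^ r := by
      rw [← Real.rpow_natCast sa d, ← Real.rpow_mul hsa.le]
      congr 1
      field_simp
    rwa [h7] at h6
  refine le_trans ?_ stepA
  apply ENNReal.ofReal_le_ofReal
  have hexp : pwR ^ (1 + r / d) = pwR * pwR ^ (r / d) := by
    rw [Real.rpow_add hpwR, Real.rpow_one]
  rw [hexp]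
  have hmul : (1 / (2 * vR * M)) ^ (r / d) * pwR ^ (r / d) = (pwR / (2 * vR * M)) ^ (r / d) := by
    rw [← Real.mul_rpow (by positivity) hpwR.le]
    congr 1
    ring
  calc 1 / 2 * (1 / (2 * vR * M)) ^ (r / d) * (pwR * pwR ^ (r / d))
      = (1 / 2 * pwR) * ((1 / (2 * vR * M)) ^ (r / d) * pwR ^ (r / d)) := by ring
    _ = (1 / 2 * pwR) * (pwR / (2 * vR * M)) ^ (r / d) := by rw [hmul]
    _ ≤ (1 / 2 * pwR) * sa ^ r := by
        apply mul_le_mul_of_nonneg_left hsar (by positivity)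
    _ = sa ^ r * (pwR / 2) := by ring
end

section
/- Let P be a Borel probability on ℝ^d with ∫‖x‖^r dP < ∞, r > 0, let n ≥ 2, and let α_n be an n-optimal codebook for P of order r. Then (second micro-macro inequality): for every a ∈ α_n, e_{n−1,r}^r − e_{n,r}^r ≤ ∫_{W₀(a|α_n)} (d(x, α_n \ {a})^r − ‖x−a‖^r) dP(x), where W₀(a|α_n) = {x : ‖x−a‖ < d(x, α_n \ {a})}. -/
open MeasureTheory Metric

/-- The `n`-th level `r`-th power quantization error `e_{n,r}^r(P)`. -/
noncomputable def qerrPow {d : ℕ} (P : Measure (EuclideanSpace ℝ (Fin d))) (r : ℝ) (n : ℕ) : ℝ :=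
  sInf {e : ℝ | ∃ α : Finset (EuclideanSpace ℝ (Fin d)), α.card ≤ n ∧
    e = ∫ x, infDist x (α : Set (EuclideanSpace ℝ (Fin d))) ^ r ∂P}


open MeasureTheory Metric

variable {d : ℕ}

-- integrability lemma
lemma integ_aux (P : Measure (EuclideanSpace ℝ (Fin d))) [IsProbabilityMeasure P]
    (r : ℝ) (hr : 0 < r) (hmom : Integrable (fun x => ‖x‖ ^ r) P)
    (s : Set (EuclideanSpace ℝ (Fin d))) (b : EuclideanSpace ℝ (Fin d)) (hb : b ∈ s) :
    Integrable (fun x => infDist x s ^ r) P := by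
  have hcont : Continuous fun x : EuclideanSpace ℝ (Fin d) => infDist x s ^ r :=
    (continuous_infDist_pt s).rpow_const (fun x => Or.inr hr.le)
  refine Integrable.mono ((hmom.add (integrable_const (‖b‖ ^ r))).const_mul (2 ^ r))
    hcont.aestronglyMeasurable (Filter.Eventually.of_forall fun x => ?_)
  have h1 : infDist x s ≤ ‖x‖ + ‖b‖ := by
    calc infDist x s ≤ dist x b := infDist_le_dist_of_mem hb
    _ ≤ ‖x‖ + ‖b‖ := by rw [dist_eq_norm]; exact norm_sub_le _ _
  have h0 : (0:ℝ) ≤ infDist x s := infDist_nonneg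
  have h2 : ‖x‖ + ‖b‖ ≤ 2 * max ‖x‖ ‖b‖ := by
    rw [two_mul]; exact add_le_add (le_max_left _ _) (le_max_right _ _)
  have h3 : infDist x s ^ r ≤ (2 * max ‖x‖ ‖b‖) ^ r :=
    Real.rpow_le_rpow h0 (h1.trans h2) hr.le
  have h4 : (2 * max ‖x‖ ‖b‖) ^ r = 2 ^ r * max ‖x‖ ‖b‖ ^ r :=
    Real.mul_rpow (by norm_num) (le_max_of_le_left (norm_nonneg _))
  have h5 : max ‖x‖ ‖b‖ ^ r ≤ ‖x‖ ^ r + ‖b‖ ^ r := by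
    rcases max_cases ‖x‖ ‖b‖ with ⟨h, _⟩ | ⟨h, _⟩ <;> rw [h]
    · nlinarith [Real.rpow_nonneg (norm_nonneg b) r]
    · nlinarith [Real.rpow_nonneg (norm_nonneg x) r]
  rw [Real.norm_of_nonneg (Real.rpow_nonneg h0 r)]
  have hnn : (0:ℝ) ≤ 2 ^ r * (‖x‖ ^ r + ‖b‖ ^ r) := by positivity
  simp only [Pi.add_apply]
  rw [show ‖2 ^ r * (‖x‖ ^ r + ‖b‖ ^ r)‖ = 2 ^ r * (‖x‖ ^ r + ‖b‖ ^ r) from Real.norm_of_nonneg hnn]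
  · calc infDist x s ^ r ≤ 2 ^ r * max ‖x‖ ‖b‖ ^ r := h4 ▸ h3
      _ ≤ 2 ^ r * (‖x‖ ^ r + ‖b‖ ^ r) := by
          have : (0:ℝ) ≤ 2 ^ r := Real.rpow_nonneg (by norm_num) r
          nlinarith

lemma qerr_le (P : Measure (EuclideanSpace ℝ (Fin d))) (r : ℝ) (hr : 0 < r) (m : ℕ)
    (β : Finset (EuclideanSpace ℝ (Fin d))) (hβ : β.card ≤ m) :
    qerrPow P r m ≤ ∫ x, infDist x (β : Set (EuclideanSpace ℝ (Fin d))) ^ r ∂P := by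
  apply csInf_le
  · refine ⟨0, fun e he => ?_⟩
    obtain ⟨γ, _, rfl⟩ := he
    exact integral_nonneg fun x => Real.rpow_nonneg infDist_nonneg r
  · exact ⟨β, hβ, rfl⟩

lemma min_key (αn : Finset (EuclideanSpace ℝ (Fin d))) (a : EuclideanSpace ℝ (Fin d))
    (ha : a ∈ αn) (hs : ((αn : Set (EuclideanSpace ℝ (Fin d))) \ {a}).Nonempty)
    (x : EuclideanSpace ℝ (Fin d)) :
    infDist x (αn : Set (EuclideanSpace ℝ (Fin d))) =
      min (dist x a) (infDist x ((αn : Set (EuclideanSpace ℝ (Fin d))) \ {a})) := by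
  set s : Set (EuclideanSpace ℝ (Fin d)) := (αn : Set _) \ {a}
  have hu : (αn : Set (EuclideanSpace ℝ (Fin d))) = {a} ∪ s := by
    rw [Set.singleton_union, Set.insert_diff_singleton, Set.insert_eq_self.mpr (Finset.mem_coe.mpr ha)]
  rw [hu]
  rw [infDist, EMetric.infEdist_union, EMetric.infEdist_singleton]
  rw [ENNReal.toReal_min (edist_ne_top _ _) (infEdist_ne_top hs)]
  rw [← dist_edist]; rfl

/-- second micro-macro inequality: for `n ≥ 2`, an `n`-optimal codebook
`α_n` and `a ∈ α_n`,
`e_{n−1,r}^r − e_{n,r}^r ≤ ∫_{W₀(a|α_n)} (d(x, α_n \ {a})^r − ‖x−a‖^r) dP(x)`. -/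
theorem stmt11 (d : ℕ) (P : Measure (EuclideanSpace ℝ (Fin d))) [IsProbabilityMeasure P]
    (r : ℝ) (hr : 0 < r) (hmom : Integrable (fun x => ‖x‖ ^ r) P)
    (n : ℕ) (hn : 2 ≤ n) (αn : Finset (EuclideanSpace ℝ (Fin d))) (hcard : αn.card = n)
    (hopt : ∫ x, infDist x (αn : Set (EuclideanSpace ℝ (Fin d))) ^ r ∂P = qerrPow P r n)
    (a : EuclideanSpace ℝ (Fin d)) (ha : a ∈ αn) :
    qerrPow P r (n - 1) - qerrPow P r n ≤
      ∫ x in {x | ‖x - a‖ < infDist x ((αn : Set (EuclideanSpace ℝ (Fin d))) \ {a})},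
        (infDist x ((αn : Set (EuclideanSpace ℝ (Fin d))) \ {a}) ^ r - ‖x - a‖ ^ r) ∂P := by
  classical
  set s : Set (EuclideanSpace ℝ (Fin d)) := (αn : Set _) \ {a} with hs_def
  have herase : ((αn.erase a : Finset _) : Set _) = s := by
    simp [s, Finset.coe_erase]
  have hsne : s.Nonempty := by
    rw [← herase, Finset.coe_nonempty, ← Finset.card_pos, Finset.card_erase_of_mem ha, hcard]
    omega
  obtain ⟨b, hb⟩ := hsne
  have hint_s : Integrable (fun x => infDist x s ^ r) P := integ_aux P r hr hmom s b hb
  have hint_α : Integrable (fun x => infDist x (αn : Set _) ^ r) P :=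
    integ_aux P r hr hmom _ a (Finset.mem_coe.mpr ha)
  have h1 : qerrPow P r (n - 1) ≤ ∫ x, infDist x s ^ r ∂P := by
    have := qerr_le P r hr (n - 1) (αn.erase a)
      (by rw [Finset.card_erase_of_mem ha, hcard])
    rwa [herase] at this
  set W : Set (EuclideanSpace ℝ (Fin d)) := {x | ‖x - a‖ < infDist x s} with hW_def
  have hWmeas : MeasurableSet W := by
    apply measurableSet_lt
    · exact (continuous_norm.comp (continuous_id.sub continuous_const)).measurable
    · exact (continuous_infDist_pt s).measurable
  have hpt : ∀ x, W.indicator (fun x => infDist x s ^ r - ‖x - a‖ ^ r) x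
      = infDist x s ^ r - infDist x (αn : Set _) ^ r := by
    intro x
    have hmin := min_key αn a ha ⟨b, hb⟩ x
    by_cases hx : x ∈ W
    · have hx' : ‖x - a‖ < infDist x s := hx
      rw [Set.indicator_of_mem hx]
      have : infDist x (αn : Set _) = ‖x - a‖ := by
        rw [hmin, dist_eq_norm]; exact min_eq_left hx'.le
      rw [this]
    · have hx' : infDist x s ≤ ‖x - a‖ := not_lt.mp hx
      rw [Set.indicator_of_notMem hx]
      have : infDist x (αn : Set _) = infDist x s := by
        rw [hmin, dist_eq_norm]; exact min_eq_right hx'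
      rw [this]; ring
  have key : ∫ x in W, (infDist x s ^ r - ‖x - a‖ ^ r) ∂P
      = ∫ x, (infDist x s ^ r - infDist x (αn : Set _) ^ r) ∂P := by
    rw [← integral_indicator hWmeas]
    exact integral_congr_ae (Filter.Eventually.of_forall hpt)
  calc qerrPow P r (n - 1) - qerrPow P r n
      ≤ (∫ x, infDist x s ^ r ∂P) - ∫ x, infDist x (αn : Set _) ^ r ∂P := by
        rw [hopt]; linarith
    _ = ∫ x, (infDist x s ^ r - infDist x (αn : Set _) ^ r) ∂P :=
        (integral_sub hint_s hint_α).symm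
    _ = ∫ x in W, (infDist x s ^ r - ‖x - a‖ ^ r) ∂P := key.symm
end

section
/- Let P = h·λ^d with compact support, ‖h‖_∞ < ∞, and suppose d(x, α_n) ≤ c₁₃ n^{−1/d} for all x ∈ supp(P) and all n. Then for all n and all a ∈ α_n: P(W(a|α_n)) ≤ c₁₄/n and ∫_{W(a|α_n)} ‖x−a‖^r dP(x) ≤ c₁₅ n^{−(1+r/d)}, with c₁₄ = ‖h‖_∞ λ^d(B(0,1)) c₁₃^d and c₁₅ = c₁₄ c₁₃^r. -/
/-!
On the support of `P` every point lies within `R = c₁₃ n^{-1/d}` of `α_n`, so the part of the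
Voronoi cell of `a` that carries mass lies in the closed ball `B(a, R)`. A density bounded by `M`
gives this ball mass at most `M λ^d(B(0,1)) R^d = c₁₄ / n`, and on it `‖x - a‖^r ≤ R^r`, which
yields the bound `c₁₄ c₁₃^r n^{-1-r/d}` for the integral.
-/

open MeasureTheory Metric

def msupport {d : ℕ} (P : Measure (EuclideanSpace ℝ (Fin d))) : Set (EuclideanSpace ℝ (Fin d)) :=
  {x | ∀ ε > 0, 0 < P (ball x ε)}

theorem measure_compl_msupport {d : ℕ} (P : Measure (EuclideanSpace ℝ (Fin d))) :
    P (msupport P)ᶜ = 0 := by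
  refine measure_null_of_locally_null _ fun x hx => ?_
  obtain ⟨ε, hε, hnull⟩ : ∃ ε > 0, P (ball x ε) = 0 := by
    simpa [msupport] using hx
  exact ⟨ball x ε, mem_nhdsWithin_of_mem_nhds (ball_mem_nhds x hε), hnull⟩

theorem ae_mem_msupport {d : ℕ} (P : Measure (EuclideanSpace ℝ (Fin d))) :
    ∀ᵐ x ∂P, x ∈ msupport P :=
  measure_compl_msupport P

section VoronoiCell

variable {E : Type*} [SeminormedAddCommGroup E]

def voronoiCell (K : Set E) (a : E) : Set E :=
  {x | ‖x - a‖ = infDist x K}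

theorem voronoiCell_ae_le_closedBall [MeasurableSpace E] {μ : Measure E} {K : Set E}
    {R : ℝ} (hK : ∀ᵐ x ∂μ, infDist x K ≤ R) (a : E) :
    voronoiCell K a ≤ᵐ[μ] closedBall a R := by
  filter_upwards [hK] with x hx hxW
  exact mem_closedBall_iff_norm.2 ((show ‖x - a‖ = infDist x K from hxW).trans_le hx)

theorem setIntegral_rpow_norm_sub_le [MeasurableSpace E]
    {μ : Measure E} {s : Set E} {a : E} {R r : ℝ} (hr : 0 ≤ r) (hs : μ s < ⊤)
    (hsR : s ≤ᵐ[μ] closedBall a R) :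
    ∫ x in s, ‖x - a‖ ^ r ∂μ ≤ R ^ r * μ.real s := by
  refine (Real.le_norm_self _).trans (norm_setIntegral_le_of_norm_le_const_ae' hs ?_)
  filter_upwards [hsR] with x hx hxs
  rw [Real.norm_of_nonneg (by positivity)]
  exact Real.rpow_le_rpow (norm_nonneg _) (mem_closedBall_iff_norm.1 (hx hxs)) hr

end VoronoiCell

theorem withDensity_ofReal_le_smul {α : Type*} [MeasurableSpace α] {μ : Measure α}
    {f : α → ℝ} {M : ℝ} (hf : ∀ x, f x ≤ M) :
    μ.withDensity (fun x => ENNReal.ofReal (f x)) ≤ ENNReal.ofReal M • μ := by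
  rw [← withDensity_const]
  exact withDensity_mono (Filter.Eventually.of_forall fun x => ENNReal.ofReal_le_ofReal (hf x))

theorem withDensity_closedBall_le {d : ℕ} {f : EuclideanSpace ℝ (Fin d) → ℝ} {M : ℝ}
    (hf : ∀ x, f x ≤ M) (hM : 0 ≤ M) (a : EuclideanSpace ℝ (Fin d)) {R : ℝ} (hR : 0 ≤ R) :
    volume.withDensity (fun x => ENNReal.ofReal (f x)) (closedBall a R) ≤
      ENNReal.ofReal (M * (volume (ball (0 : EuclideanSpace ℝ (Fin d)) 1)).toReal * R ^ d) := by
  refine (withDensity_ofReal_le_smul hf _).trans_eq ?_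
  rw [Measure.smul_apply, smul_eq_mul, Measure.addHaar_closedBall _ _ hR,
    finrank_euclideanSpace_fin, ENNReal.ofReal_mul (mul_nonneg hM ENNReal.toReal_nonneg),
    ENNReal.ofReal_mul hM, ENNReal.ofReal_toReal measure_ball_lt_top.ne]
  ring

theorem rpow_neg_one_div_natCast_pow {x : ℝ} (hx : 0 ≤ x) {d : ℕ} (hd : d ≠ 0) :
    (x ^ (-(1 / (d : ℝ)))) ^ d = x⁻¹ := by
  rw [Real.rpow_neg hx, inv_pow, one_div, Real.rpow_inv_natCast_pow hx hd]

theorem stmt14_general (d : ℕ) (hd : 0 < d) (r : ℝ) (hr : 0 < r)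
    (h : EuclideanSpace ℝ (Fin d) → ℝ) (hnn : ∀ x, 0 ≤ h x)
    (M : ℝ) (hM : ∀ x, h x ≤ M)
    (P : Measure (EuclideanSpace ℝ (Fin d)))
    (hP : P = volume.withDensity (fun x => ENNReal.ofReal (h x)))
    (α : ℕ → Finset (EuclideanSpace ℝ (Fin d)))
    (c₁₃ : ℝ) (hc₁₃ : 0 < c₁₃)
    (hdist : ∀ n : ℕ, 1 ≤ n → ∀ x ∈ msupport P,
      infDist x ((α n : Set (EuclideanSpace ℝ (Fin d)))) ≤ c₁₃ * (n : ℝ) ^ (-(1 / (d : ℝ)))) :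
    ∀ n : ℕ, 1 ≤ n → ∀ a ∈ α n,
      P {x | ‖x - a‖ = infDist x ((α n : Set (EuclideanSpace ℝ (Fin d))))} ≤
        ENNReal.ofReal
          (M * (volume (ball (0 : EuclideanSpace ℝ (Fin d)) 1)).toReal * c₁₃ ^ (d : ℝ) / n) ∧
      ∫ x in {x | ‖x - a‖ = infDist x ((α n : Set (EuclideanSpace ℝ (Fin d))))},
          ‖x - a‖ ^ r ∂P ≤
        M * (volume (ball (0 : EuclideanSpace ℝ (Fin d)) 1)).toReal * c₁₃ ^ (d : ℝ) * c₁₃ ^ r *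
          (n : ℝ) ^ (-(1 + r / d)) := by
  intro n hn a _
  have hn0 : (0 : ℝ) < n := by exact_mod_cast hn
  have hM0 : 0 ≤ M := (hnn 0).trans (hM 0)
  set V := (volume (ball (0 : EuclideanSpace ℝ (Fin d)) 1)).toReal with hV
  set R := c₁₃ * (n : ℝ) ^ (-(1 / (d : ℝ)))
  have hcell : voronoiCell (α n : Set (EuclideanSpace ℝ (Fin d))) a ≤ᵐ[P] closedBall a R :=
    voronoiCell_ae_le_closedBall ((ae_mem_msupport P).mono (hdist n hn)) a
  have hball : P (closedBall a R) ≤ ENNReal.ofReal (M * V * c₁₃ ^ (d : ℝ) / n) := by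
    rw [hP]
    refine (withDensity_closedBall_le hM hM0 a (by positivity)).trans_eq ?_
    rw [← hV, mul_pow, rpow_neg_one_div_natCast_pow hn0.le hd.ne', Real.rpow_natCast]
    congr 1
    ring
  have hPW := (measure_mono_ae hcell).trans hball
  refine ⟨hPW, ?_⟩
  calc ∫ x in voronoiCell (α n : Set (EuclideanSpace ℝ (Fin d))) a, ‖x - a‖ ^ r ∂P
      ≤ R ^ r * P.real (voronoiCell (α n : Set (EuclideanSpace ℝ (Fin d))) a) :=
        setIntegral_rpow_norm_sub_le hr.le (hPW.trans_lt ENNReal.ofReal_lt_top) hcell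
    _ ≤ R ^ r * (M * V * c₁₃ ^ (d : ℝ) / n) := by
        gcongr
        exact ENNReal.toReal_le_of_le_ofReal (div_nonneg (by positivity) hn0.le) hPW
    _ = M * V * c₁₃ ^ (d : ℝ) * c₁₃ ^ r * (n : ℝ) ^ (-(1 + r / d)) := by
        rw [Real.mul_rpow hc₁₃.le (by positivity), ← Real.rpow_mul hn0.le,
          show -(1 + r / d) = -(1 / (d : ℝ)) * r + -1 by ring, Real.rpow_add hn0,
          Real.rpow_neg_one]
        ring

/-- if `d(x,α_n) ≤ c₁₃ n^{−1/d}` on the compact support of `P = h·λ^d` with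
`h ≤ M`, then each Voronoi cell satisfies `P(W(a|α_n)) ≤ c₁₄/n` and
`∫_{W(a|α_n)} ‖x−a‖^r dP ≤ c₁₅ n^{−(1+r/d)}`, with
`c₁₄ = M λ^d(B(0,1)) c₁₃^d` and `c₁₅ = c₁₄ c₁₃^r`. -/
theorem stmt14 (d : ℕ) (hd : 0 < d) (r : ℝ) (hr : 0 < r)
    (h : EuclideanSpace ℝ (Fin d) → ℝ) (hmeas : Measurable h) (hnn : ∀ x, 0 ≤ h x)
    (M : ℝ) (hM : ∀ x, h x ≤ M)
    (P : Measure (EuclideanSpace ℝ (Fin d)))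
    (hP : P = volume.withDensity (fun x => ENNReal.ofReal (h x)))
    [IsProbabilityMeasure P]
    (hKcpt : IsCompact (msupport P))
    (α : ℕ → Finset (EuclideanSpace ℝ (Fin d)))
    (c₁₃ : ℝ) (hc₁₃ : 0 < c₁₃)
    (hdist : ∀ n : ℕ, 1 ≤ n → ∀ x ∈ msupport P,
      infDist x ((α n : Set (EuclideanSpace ℝ (Fin d)))) ≤ c₁₃ * (n : ℝ) ^ (-(1 / (d : ℝ)))) :
    ∀ n : ℕ, 1 ≤ n → ∀ a ∈ α n,
      P {x | ‖x - a‖ = infDist x ((α n : Set (EuclideanSpace ℝ (Fin d))))} ≤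
        ENNReal.ofReal
          (M * (volume (ball (0 : EuclideanSpace ℝ (Fin d)) 1)).toReal * c₁₃ ^ (d : ℝ) / n) ∧
      ∫ x in {x | ‖x - a‖ = infDist x ((α n : Set (EuclideanSpace ℝ (Fin d))))},
          ‖x - a‖ ^ r ∂P ≤
        M * (volume (ball (0 : EuclideanSpace ℝ (Fin d)) 1)).toReal * c₁₃ ^ (d : ℝ) * c₁₃ ^ r *
          (n : ℝ) ^ (-(1 + r / d)) :=
  stmt14_general d hd r hr h hnn M hM P hP α c₁₃ hc₁₃ hdist
end

section
/- Let h : ℝ^d → [0,∞) be a density, a ∈ ℝ^d, W ⊂ ℝ^d a Borel set, n ∈ ℕ, and c₂₁ > 0, r > 0. Suppose that for λ^d-a.e. x ∈ W, ‖x−a‖ ≤ c₂₁ n^{−1/d} h(x)^{−1/(r+d)}. Let t̄ = ess sup_{W} h. Then P(W) = ∫_W h dλ^d ≤ λ^d(B(0,1)) · ((r+d)/r) · c₂₁^d · t̄^{r/(r+d)} · n^{−1}. -/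
open MeasureTheory Metric Set

/-!
Above level `t`, the hypothesis confines `{h > t} ∩ W` (up to a null set) to a ball around `a`
of radius `c₂₁ n^{-1/d} t^{-1/(r+d)}`, so its measure is at most
`λ(B(0,1)) c₂₁^d n⁻¹ t^{-d/(r+d)}`; above `t̄` it is null. Integrating this bound over `(0, t̄]`
in the layer-cake formula gives the claim, since `d/(r+d) < 1`.
-/

theorem lintegral_Ioc_ofReal_rpow {s T : ℝ} (hs : -1 < s) (hT : 0 ≤ T) :
    ∫⁻ t in Ioc 0 T, ENNReal.ofReal (t ^ s) = ENNReal.ofReal (T ^ (s + 1) / (s + 1)) := by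
  have hint : IntegrableOn (fun t : ℝ ↦ t ^ s) (Ioc 0 T) := by
    simpa [IntegrableOn, uIoc_of_le hT] using
      (intervalIntegral.intervalIntegrable_rpow' (a := 0) (b := T) hs).1
  have hnonneg : 0 ≤ᵐ[volume.restrict (Ioc 0 T)] fun t : ℝ ↦ t ^ s := by
    filter_upwards [ae_restrict_mem measurableSet_Ioc] with t ht
    exact Real.rpow_nonneg ht.1.le s
  rw [← ofReal_integral_eq_lintegral_ofReal hint hnonneg, ← intervalIntegral.integral_of_le hT,
    integral_rpow (Or.inl hs), Real.zero_rpow (by linarith), sub_zero]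

theorem lintegral_ofReal_le_of_meas_lt_le_mul_rpow {α : Type*} [MeasurableSpace α]
    {μ : Measure α} {f : α → ℝ} (hf : AEMeasurable f μ) (hf0 : 0 ≤ᵐ[μ] f) {T C p : ℝ}
    (hfT : ∀ᵐ x ∂μ, f x ≤ T) (hC : 0 ≤ C) (hp : p < 1)
    (hlevel : ∀ t ∈ Ioc 0 T, μ {x | t < f x} ≤ ENNReal.ofReal (C * t ^ (-p))) :
    ∫⁻ x, ENNReal.ofReal (f x) ∂μ ≤ ENNReal.ofReal (C * (T ^ (1 - p) / (1 - p))) := by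
  rcases le_or_gt T 0 with hT | hT
  · have hzero : ∀ᵐ x ∂μ, ENNReal.ofReal (f x) = 0 := by
      filter_upwards [hfT] with x hx
      exact ENNReal.ofReal_eq_zero.mpr (hx.trans hT)
    simp [lintegral_congr_ae hzero]
  have hlevel' : ∀ t ∈ Ioi (0 : ℝ),
      μ {x | t < f x} ≤ (Ioc 0 T).indicator (fun t ↦ ENNReal.ofReal (C * t ^ (-p))) t := by
    intro t ht
    by_cases htT : t ≤ T
    · rw [indicator_of_mem (show t ∈ Ioc 0 T from ⟨ht, htT⟩)]
      exact hlevel t ⟨ht, htT⟩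
    · rw [indicator_of_notMem (fun h : t ∈ Ioc 0 T ↦ htT h.2), nonpos_iff_eq_zero,
        measure_eq_zero_iff_ae_notMem]
      filter_upwards [hfT] with x hx
      exact fun hlt ↦ htT (hlt.le.trans hx)
  calc ∫⁻ x, ENNReal.ofReal (f x) ∂μ = ∫⁻ t in Ioi 0, μ {x | t < f x} :=
        lintegral_eq_lintegral_meas_lt μ hf0 hf
    _ ≤ ∫⁻ t in Ioi 0, (Ioc 0 T).indicator (fun t ↦ ENNReal.ofReal (C * t ^ (-p))) t :=
        setLIntegral_mono' measurableSet_Ioi hlevel'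
    _ = ∫⁻ t in Ioc 0 T, ENNReal.ofReal C * ENNReal.ofReal (t ^ (-p)) := by
        rw [lintegral_indicator measurableSet_Ioc, Measure.restrict_restrict measurableSet_Ioc,
          inter_eq_left.mpr Ioc_subset_Ioi_self]
        simp_rw [ENNReal.ofReal_mul hC]
    _ = ENNReal.ofReal (C * (T ^ (1 - p) / (1 - p))) := by
        rw [lintegral_const_mul' _ _ ENNReal.ofReal_ne_top,
          lintegral_Ioc_ofReal_rpow (by linarith) hT.le, ← ENNReal.ofReal_mul hC, neg_add_eq_sub]

theorem measure_lt_le_of_norm_sub_le_mul_rpow {E : Type*} [NormedAddCommGroup E]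
    [NormedSpace ℝ E] [MeasurableSpace E] [BorelSpace E] [FiniteDimensional ℝ E]
    (μ : Measure E) [μ.IsAddHaarMeasure] {s : Set E} {h : E → ℝ} {a : E} {K q t : ℝ}
    (hK : 0 ≤ K) (hq : 0 ≤ q) (ht : 0 < t)
    (hdist : ∀ᵐ x ∂μ.restrict s, 0 < h x → ‖x - a‖ ≤ K * h x ^ (-q)) :
    μ.restrict s {x | t < h x} ≤
      ENNReal.ofReal ((K * t ^ (-q)) ^ Module.finrank ℝ E) * μ (ball 0 1) := by
  have hsub : {x | t < h x} ≤ᵐ[μ.restrict s] closedBall a (K * t ^ (-q)) := by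
    filter_upwards [hdist] with x hx (hxt : t < h x)
    change x ∈ closedBall a _
    rw [mem_closedBall, dist_eq_norm]
    refine (hx (ht.trans hxt)).trans (mul_le_mul_of_nonneg_left ?_ hK)
    exact Real.rpow_le_rpow_of_nonpos ht hxt.le (neg_nonpos.mpr hq)
  calc μ.restrict s {x | t < h x} ≤ μ.restrict s (closedBall a (K * t ^ (-q))) :=
        measure_mono_ae hsub
    _ ≤ μ (closedBall a (K * t ^ (-q))) := Measure.restrict_apply_le _ _
    _ = _ := Measure.addHaar_closedBall μ a (by positivity)

theorem mul_rpow_neg_one_div_mul_rpow_neg_pow {c N t q : ℝ} {d : ℕ} (hc : 0 ≤ c) (hN : 0 ≤ N)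
    (ht : 0 ≤ t) (hd : d ≠ 0) :
    (c * N ^ (-(1 / (d : ℝ))) * t ^ (-q)) ^ d = c ^ (d : ℝ) * N⁻¹ * t ^ (-(d * q)) := by
  rw [← Real.rpow_natCast, Real.mul_rpow (by positivity) (by positivity), Real.mul_rpow hc
    (by positivity), ← Real.rpow_mul hN, ← Real.rpow_mul ht, neg_mul,
    one_div_mul_cancel (by exact_mod_cast hd), Real.rpow_neg_one, neg_mul, mul_comm q]

theorem stmt15_general (d : ℕ) (hd : 0 < d) (r : ℝ) (hr : 0 < r) (c₂₁ : ℝ) (hc₂₁ : 0 < c₂₁)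
    (n : ℕ)
    (h : EuclideanSpace ℝ (Fin d) → ℝ) (hmeas : Measurable h) (hnn : ∀ x, 0 ≤ h x)
    (a : EuclideanSpace ℝ (Fin d)) (W : Set (EuclideanSpace ℝ (Fin d)))
    (tbar : ℝ) (htbar : ∀ᵐ x ∂volume.restrict W, h x ≤ tbar)
    (hdist : ∀ᵐ x ∂volume.restrict W, 0 < h x →
      ‖x - a‖ ≤ c₂₁ * (n : ℝ) ^ (-(1 / (d : ℝ))) * h x ^ (-(1 / (r + d)))) :
    ∫⁻ x in W, ENNReal.ofReal (h x) ∂volume ≤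
      ENNReal.ofReal ((volume (ball (0 : EuclideanSpace ℝ (Fin d)) 1)).toReal *
        ((r + d) / r) * c₂₁ ^ (d : ℝ) * tbar ^ (r / (r + d)) * (n : ℝ)⁻¹) := by
  set V := volume (ball (0 : EuclideanSpace ℝ (Fin d)) 1) with hV
  have hrd : 0 < r + d := by positivity
  have hexp : 1 - d * (1 / (r + d)) = r / (r + d) := by field_simp; ring
  have hlevel : ∀ t ∈ Ioc 0 tbar, volume.restrict W {x | t < h x} ≤
      ENNReal.ofReal (V.toReal * c₂₁ ^ (d : ℝ) * (n : ℝ)⁻¹ * t ^ (-(d * (1 / (r + d))))) := by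
    rintro t ⟨ht, -⟩
    refine (measure_lt_le_of_norm_sub_le_mul_rpow volume (by positivity) (by positivity) ht
      hdist).trans_eq ?_
    rw [finrank_euclideanSpace_fin, mul_rpow_neg_one_div_mul_rpow_neg_pow hc₂₁.le n.cast_nonneg
      ht.le hd.ne', mul_comm, ← ENNReal.ofReal_toReal measure_ball_lt_top.ne,
      ← ENNReal.ofReal_mul ENNReal.toReal_nonneg, ← hV]
    ring_nf
  calc ∫⁻ x in W, ENNReal.ofReal (h x) ≤ ENNReal.ofReal (V.toReal * c₂₁ ^ (d : ℝ) * (n : ℝ)⁻¹ *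
        (tbar ^ (1 - d * (1 / (r + d))) / (1 - d * (1 / (r + d))))) :=
      lintegral_ofReal_le_of_meas_lt_le_mul_rpow hmeas.aemeasurable (ae_of_all _ hnn) htbar
        (by positivity) (by rw [mul_one_div, div_lt_one hrd]; linarith) hlevel
    _ = _ := by rw [hexp]; congr 1; field_simp

/-- if `‖x−a‖ ≤ c₂₁ n^{−1/d} h(x)^{−1/(r+d)}` a.e. on `W` and `h ≤ t̄` a.e.
on `W`, then `P(W) = ∫_W h dλ ≤ λ^d(B(0,1))·((r+d)/r)·c₂₁^d·t̄^{r/(r+d)}·n^{−1}`. -/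
theorem stmt15 (d : ℕ) (hd : 0 < d) (r : ℝ) (hr : 0 < r) (c₂₁ : ℝ) (hc₂₁ : 0 < c₂₁)
    (n : ℕ) (hn : 1 ≤ n)
    (h : EuclideanSpace ℝ (Fin d) → ℝ) (hmeas : Measurable h) (hnn : ∀ x, 0 ≤ h x)
    (a : EuclideanSpace ℝ (Fin d)) (W : Set (EuclideanSpace ℝ (Fin d))) (hW : MeasurableSet W)
    (tbar : ℝ) (htbar : ∀ᵐ x ∂volume.restrict W, h x ≤ tbar)
    (hdist : ∀ᵐ x ∂volume.restrict W, 0 < h x →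
      ‖x - a‖ ≤ c₂₁ * (n : ℝ) ^ (-(1 / (d : ℝ))) * h x ^ (-(1 / (r + d)))) :
    ∫⁻ x in W, ENNReal.ofReal (h x) ∂volume ≤
      ENNReal.ofReal ((volume (ball (0 : EuclideanSpace ℝ (Fin d)) 1)).toReal *
        ((r + d) / r) * c₂₁ ^ (d : ℝ) * tbar ^ (r / (r + d)) * (n : ℝ)⁻¹) :=
  stmt15_general d hd r hr c₂₁ hc₂₁ n h hmeas hnn a W tbar htbar hdist
end

section
/- In the setting of the previous statement, with additionally t̲ = ess inf_W h > 0, one has ∫_W ‖x−a‖^r h(x) dλ^d(x) ≤ c₂₃ (1 + log(t̄/t̲)) n^{−(1+r/d)}, where c₂₃ = c₂₁^{r+d} λ^d(B(0,1)). -/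
/-!
Layer cake with respect to the weighted measure `‖x - a‖ ^ r dλ` on `W` turns the integral into
`∫₀^t̄ (weighted mass of {h > t}) dt`. Every point of `W ∩ {h > t}` satisfies
`h ≥ s := max t t̲`, hence lies in a ball of radius `R = c₂₁ n^{-1/d} s^{-1/(r+d)}`, so that mass
is at most `R ^ r · λ(B(a, R)) = c₂₁^{r+d} λ(B(0,1)) n^{-(1+r/d)} / s`. Finally
`∫₀^t̄ dt / max t t̲ = 1 + log (t̄ / t̲)`.
-/

open MeasureTheory Metric Set Module

theorem lintegral_Ioc_ofReal_inv {a b : ℝ} (ha : 0 < a) (hab : a ≤ b) :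
    ∫⁻ t in Ioc a b, ENNReal.ofReal t⁻¹ = ENNReal.ofReal (Real.log (b / a)) := by
  have hint : IntegrableOn (fun t : ℝ => t⁻¹) (Ioc a b) :=
    ((continuousOn_inv₀.mono fun t ht => (ha.trans_le ht.1).ne').integrableOn_Icc).mono_set
      Ioc_subset_Icc_self
  have hnonneg : ∀ᵐ t ∂volume.restrict (Ioc a b), 0 ≤ t⁻¹ :=
    (ae_restrict_mem measurableSet_Ioc).mono fun t ht => inv_nonneg.mpr (ha.trans ht.1).le
  rw [← ofReal_integral_eq_lintegral_ofReal hint hnonneg, ← intervalIntegral.integral_of_le hab,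
    integral_inv_of_pos ha (ha.trans_le hab)]

theorem lintegral_Ioc_ofReal_inv_max {a b : ℝ} (ha : 0 < a) (hab : a ≤ b) :
    ∫⁻ t in Ioc 0 b, ENNReal.ofReal (max t a)⁻¹ = 1 + ENNReal.ofReal (Real.log (b / a)) := by
  rw [← Ioc_union_Ioc_eq_Ioc ha.le hab,
    lintegral_union measurableSet_Ioc (Ioc_disjoint_Ioc_of_le le_rfl)]
  congr 1
  · calc ∫⁻ t in Ioc 0 a, ENNReal.ofReal (max t a)⁻¹
        = ∫⁻ _ in Ioc 0 a, ENNReal.ofReal a⁻¹ :=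
          setLIntegral_congr_fun measurableSet_Ioc fun t ht => by rw [max_eq_right ht.2]
      _ = 1 := by
          rw [setLIntegral_const, Real.volume_Ioc, sub_zero, ← ENNReal.ofReal_mul (by positivity),
            inv_mul_cancel₀ ha.ne', ENNReal.ofReal_one]
  · rw [← lintegral_Ioc_ofReal_inv ha hab]
    exact setLIntegral_congr_fun measurableSet_Ioc fun t ht => by rw [max_eq_left ht.1.le]

theorem lintegral_Ioi_le_of_le_inv_max {F : ℝ → ENNReal} {C : ENNReal} {a b : ℝ} (hC : C ≠ ⊤)
    (ha : 0 < a) (hab : a ≤ b) (hF : ∀ t, F t ≤ C * ENNReal.ofReal (max t a)⁻¹)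
    (hF_zero : ∀ t ∈ Ioi b, F t = 0) :
    ∫⁻ t in Ioi 0, F t ≤ C * ENNReal.ofReal (1 + Real.log (b / a)) := by
  calc ∫⁻ t in Ioi 0, F t ≤ (∫⁻ t in Ioc 0 b, F t) + ∫⁻ t in Ioi b, F t := by
        rw [← Ioc_union_Ioi_eq_Ioi (ha.le.trans hab)]
        exact lintegral_union_le _ _ _
    _ ≤ (∫⁻ t in Ioc 0 b, C * ENNReal.ofReal (max t a)⁻¹) + 0 := by
        gcongr with t
        · exact hF t
        · exact (setLIntegral_congr_fun measurableSet_Ioi hF_zero).trans_le lintegral_zero.le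
    _ = C * ENNReal.ofReal (1 + Real.log (b / a)) := by
        rw [add_zero, lintegral_const_mul' _ _ hC, lintegral_Ioc_ofReal_inv_max ha hab,
          ENNReal.ofReal_add zero_le_one (Real.log_nonneg ((one_le_div ha).mpr hab)),
          ENNReal.ofReal_one]

theorem setLIntegral_ofReal_mul_eq_lintegral_levelSet {α : Type*} [MeasurableSpace α]
    (μ : Measure α) (W : Set α) {f g : α → ℝ} (hf : Measurable f) (hg : Measurable g)
    (hg₀ : ∀ᵐ x ∂μ.restrict W, 0 ≤ g x) :
    ∫⁻ x in W, ENNReal.ofReal (f x * g x) ∂μ =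
      ∫⁻ t in Ioi 0, ∫⁻ x in {x | t < g x}, ENNReal.ofReal (f x) ∂μ.restrict W := by
  set ν := (μ.restrict W).withDensity fun x => ENNReal.ofReal (f x)
  calc ∫⁻ x in W, ENNReal.ofReal (f x * g x) ∂μ = ∫⁻ x, ENNReal.ofReal (g x) ∂ν := by
        rw [lintegral_withDensity_eq_lintegral_mul _ hf.ennreal_ofReal hg.ennreal_ofReal]
        exact lintegral_congr_ae (hg₀.mono fun x hx => ENNReal.ofReal_mul' hx)
    _ = ∫⁻ t in Ioi 0, ν {x | t < g x} :=
        lintegral_eq_lintegral_meas_lt ν (withDensity_absolutelyContinuous _ _ hg₀)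
          hg.aemeasurable
    _ = _ := setLIntegral_congr_fun measurableSet_Ioi fun t _ =>
        withDensity_apply _ (measurableSet_lt measurable_const hg)

theorem rpow_mul_rpow_neg_inv_rpow {A s p : ℝ} (hA : 0 ≤ A) (hs : 0 < s) (hp : p ≠ 0) :
    (A * s ^ (-p⁻¹)) ^ p = A ^ p * s⁻¹ := by
  rw [Real.mul_rpow hA (by positivity), ← Real.rpow_mul hs.le, neg_mul, inv_mul_cancel₀ hp,
    Real.rpow_neg_one]

section HaarMeasure

variable {E : Type*} [NormedAddCommGroup E] [NormedSpace ℝ E] [FiniteDimensional ℝ E]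
  [MeasurableSpace E] [BorelSpace E] (μ : Measure E) [μ.IsAddHaarMeasure]

theorem setLIntegral_norm_sub_rpow_le_of_ae_norm_le {s : Set E} {a : E} {r R : ℝ}
    (hr : 0 < r) (hR : 0 ≤ R) (hs : ∀ᵐ x ∂μ.restrict s, ‖x - a‖ ≤ R) :
    ∫⁻ x in s, ENNReal.ofReal (‖x - a‖ ^ r) ∂μ ≤
      ENNReal.ofReal (R ^ (r + finrank ℝ E)) * μ (ball 0 1) := by
  have hs_ball : μ s ≤ μ (closedBall a R) :=
    calc μ s = μ.restrict s univ := (Measure.restrict_apply_univ s).symm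
      _ ≤ μ.restrict s (closedBall a R) :=
          measure_mono_ae (hs.mono fun x hx _ => mem_closedBall_iff_norm.mpr hx)
      _ = μ (closedBall a R ∩ s) := Measure.restrict_apply measurableSet_closedBall
      _ ≤ μ (closedBall a R) := measure_mono inter_subset_left
  calc ∫⁻ x in s, ENNReal.ofReal (‖x - a‖ ^ r) ∂μ ≤ ∫⁻ _ in s, ENNReal.ofReal (R ^ r) ∂μ :=
        lintegral_mono_ae <| hs.mono fun x hx =>
          ENNReal.ofReal_le_ofReal (Real.rpow_le_rpow (norm_nonneg _) hx hr.le)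
    _ = ENNReal.ofReal (R ^ r) * μ s := setLIntegral_const _ _
    _ ≤ ENNReal.ofReal (R ^ r) * μ (closedBall a R) := by gcongr
    _ = ENNReal.ofReal (R ^ (r + finrank ℝ E)) * μ (ball 0 1) := by
        rw [Measure.addHaar_closedBall μ a hR, ← mul_assoc, ← ENNReal.ofReal_mul (by positivity),
          Real.rpow_add' hR (by positivity), Real.rpow_natCast]

theorem setLIntegral_levelSet_le {h : E → ℝ} (hh : Measurable h) {W : Set E} {a : E}
    {r A tlo : ℝ} (hr : 0 < r) (hA : 0 ≤ A) (htlo : 0 < tlo)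
    (hlo : ∀ᵐ x ∂μ.restrict W, tlo ≤ h x)
    (hdist : ∀ᵐ x ∂μ.restrict W, 0 < h x →
      ‖x - a‖ ≤ A * h x ^ (-(1 / (r + finrank ℝ E)))) (t : ℝ) :
    ∫⁻ x in {x | t < h x}, ENNReal.ofReal (‖x - a‖ ^ r) ∂μ.restrict W ≤
      ENNReal.ofReal (A ^ (r + finrank ℝ E)) * μ (ball 0 1) * ENNReal.ofReal (max t tlo)⁻¹ := by
  set p : ℝ := r + finrank ℝ E
  have hp : 0 < p := by positivity
  set s := max t tlo
  have hs : 0 < s := lt_max_of_lt_right htlo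
  have hlevel : MeasurableSet {x | t < h x} := measurableSet_lt measurable_const hh
  have hball : ∀ᵐ x ∂(μ.restrict W).restrict {x | t < h x}, ‖x - a‖ ≤ A * s ^ (-p⁻¹) := by
    rw [ae_restrict_iff' hlevel]
    filter_upwards [hlo, hdist] with x hxlo hxdist hxt
    have hsx : s ≤ h x := max_le (le_of_lt hxt) hxlo
    calc ‖x - a‖ ≤ A * h x ^ (-p⁻¹) := by simpa only [one_div] using hxdist (hs.trans_le hsx)
      _ ≤ A * s ^ (-p⁻¹) := mul_le_mul_of_nonneg_left
        (Real.rpow_le_rpow_of_nonpos hs hsx (neg_nonpos.mpr (inv_nonneg.mpr hp.le))) hA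
  rw [Measure.restrict_restrict hlevel] at hball ⊢
  calc _ ≤ ENNReal.ofReal ((A * s ^ (-p⁻¹)) ^ p) * μ (ball 0 1) :=
        setLIntegral_norm_sub_rpow_le_of_ae_norm_le μ hr (by positivity) hball
    _ = _ := by
        rw [rpow_mul_rpow_neg_inv_rpow hA hs hp.ne', ENNReal.ofReal_mul (by positivity)]
        ring

theorem setLIntegral_norm_sub_rpow_mul_le {h : E → ℝ} (hh : Measurable h) {W : Set E} {a : E}
    {r A tlo tbar : ℝ} (hr : 0 < r) (hA : 0 ≤ A) (htlo : 0 < tlo) (htlo_tbar : tlo ≤ tbar)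
    (hlo : ∀ᵐ x ∂μ.restrict W, tlo ≤ h x) (hhi : ∀ᵐ x ∂μ.restrict W, h x ≤ tbar)
    (hdist : ∀ᵐ x ∂μ.restrict W, 0 < h x →
      ‖x - a‖ ≤ A * h x ^ (-(1 / (r + finrank ℝ E)))) :
    ∫⁻ x in W, ENNReal.ofReal (‖x - a‖ ^ r * h x) ∂μ ≤
      ENNReal.ofReal (A ^ (r + finrank ℝ E)) * μ (ball 0 1) *
        ENNReal.ofReal (1 + Real.log (tbar / tlo)) := by
  rw [setLIntegral_ofReal_mul_eq_lintegral_levelSet μ W (by fun_prop) hh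
    (hlo.mono fun x hx => htlo.le.trans hx)]
  refine lintegral_Ioi_le_of_le_inv_max (by finiteness) htlo htlo_tbar
    (setLIntegral_levelSet_le μ hh hr hA htlo hlo hdist) fun t ht => ?_
  refine setLIntegral_measure_zero _ _ (measure_eq_zero_iff_ae_notMem.mpr ?_)
  exact hhi.mono fun x hx => (hx.trans ht.le).not_gt

end HaarMeasure

theorem stmt16_general (d : ℕ) (hd : 0 < d) (r : ℝ) (hr : 0 < r) (c₂₁ : ℝ) (hc₂₁ : 0 < c₂₁)
    (n : ℕ)
    (h : EuclideanSpace ℝ (Fin d) → ℝ) (hmeas : Measurable h)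
    (a : EuclideanSpace ℝ (Fin d)) (W : Set (EuclideanSpace ℝ (Fin d)))
    (tlo tbar : ℝ) (htlo : 0 < tlo)
    (hlo : ∀ᵐ x ∂volume.restrict W, tlo ≤ h x)
    (hhi : ∀ᵐ x ∂volume.restrict W, h x ≤ tbar)
    (hdist : ∀ᵐ x ∂volume.restrict W, 0 < h x →
      ‖x - a‖ ≤ c₂₁ * (n : ℝ) ^ (-(1 / (d : ℝ))) * h x ^ (-(1 / (r + d)))) :
    ∫⁻ x in W, ENNReal.ofReal (‖x - a‖ ^ r * h x) ∂volume ≤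
      ENNReal.ofReal (c₂₁ ^ (r + d) * (volume (ball (0 : EuclideanSpace ℝ (Fin d)) 1)).toReal *
        (1 + Real.log (tbar / tlo)) * (n : ℝ) ^ (-(1 + r / d))) := by
  rcases lt_or_ge tbar tlo with hempty | htlo_tbar
  · have hW0 : volume.restrict W = 0 := ae_eq_bot.mp <| Filter.eventually_false_iff_eq_bot.mp <|
      (hlo.and hhi).mono fun x hx => hempty.not_ge (hx.1.trans hx.2)
    simp [hW0]
  have hdim : (finrank ℝ (EuclideanSpace ℝ (Fin d)) : ℝ) = d := by simp
  set A := c₂₁ * (n : ℝ) ^ (-(1 / (d : ℝ)))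
  have hconst : c₂₁ ^ (r + d) * (volume (ball (0 : EuclideanSpace ℝ (Fin d)) 1)).toReal *
      (1 + Real.log (tbar / tlo)) * (n : ℝ) ^ (-(1 + r / d)) =
      A ^ (r + d) * (volume (ball (0 : EuclideanSpace ℝ (Fin d)) 1)).toReal *
        (1 + Real.log (tbar / tlo)) := by
    have hd₀ : (d : ℝ) ≠ 0 := by positivity
    have hexp : -(1 / (d : ℝ)) * (r + d) = -(1 + r / d) := by field_simp; ring
    rw [Real.mul_rpow hc₂₁.le (by positivity), ← Real.rpow_mul (Nat.cast_nonneg n), hexp]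
    ring
  have hV : volume (ball (0 : EuclideanSpace ℝ (Fin d)) 1) ≠ ⊤ := measure_ball_lt_top.ne
  calc _ ≤ ENNReal.ofReal (A ^ (r + d)) * volume (ball (0 : EuclideanSpace ℝ (Fin d)) 1) *
        ENNReal.ofReal (1 + Real.log (tbar / tlo)) := by
        simpa only [hdim] using setLIntegral_norm_sub_rpow_mul_le volume hmeas hr (by positivity)
          htlo htlo_tbar hlo hhi (by simpa only [hdim] using hdist)
    _ = _ := by
        rw [hconst, ENNReal.ofReal_mul (by positivity), ENNReal.ofReal_mul (by positivity),
          ENNReal.ofReal_toReal hV]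

/-- under the distance bound of STATEMENT 15 and with
`0 < t̲ ≤ h ≤ t̄` a.e. on `W`, the local inertia satisfies
`∫_W ‖x−a‖^r h dλ ≤ c₂₃ (1 + log(t̄/t̲)) n^{−(1+r/d)}` with
`c₂₃ = c₂₁^{r+d} λ^d(B(0,1))`. -/
theorem stmt16 (d : ℕ) (hd : 0 < d) (r : ℝ) (hr : 0 < r) (c₂₁ : ℝ) (hc₂₁ : 0 < c₂₁)
    (n : ℕ) (hn : 1 ≤ n)
    (h : EuclideanSpace ℝ (Fin d) → ℝ) (hmeas : Measurable h) (hnn : ∀ x, 0 ≤ h x)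
    (a : EuclideanSpace ℝ (Fin d)) (W : Set (EuclideanSpace ℝ (Fin d))) (hW : MeasurableSet W)
    (tlo tbar : ℝ) (htlo : 0 < tlo)
    (hlo : ∀ᵐ x ∂volume.restrict W, tlo ≤ h x)
    (hhi : ∀ᵐ x ∂volume.restrict W, h x ≤ tbar)
    (hdist : ∀ᵐ x ∂volume.restrict W, 0 < h x →
      ‖x - a‖ ≤ c₂₁ * (n : ℝ) ^ (-(1 / (d : ℝ))) * h x ^ (-(1 / (r + d)))) :
    ∫⁻ x in W, ENNReal.ofReal (‖x - a‖ ^ r * h x) ∂volume ≤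
      ENNReal.ofReal (c₂₁ ^ (r + d) * (volume (ball (0 : EuclideanSpace ℝ (Fin d)) 1)).toReal *
        (1 + Real.log (tbar / tlo)) * (n : ℝ) ^ (-(1 + r / d))) :=
  stmt16_general d hd r hr c₂₁ hc₂₁ n h hmeas a W tlo tbar htlo hlo hhi hdist
end
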